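/- (Value of the unit-demand problem and knife-edge indifference.) Assume F({θ ∈ Θ : θ < c}) > 0. Then the optimal worst-case value under unknown correlation is sup over q ∈ Q₁ of inf over m ∈ M₀ of W₁(q,m) = ∫_Θ max{θ − c, 0} dF(θ) + max{μ − ∫_Θ max{c − θ, 0} dF(θ), 0}. Moreover, if μ = ∫_Θ max{c − θ, 0} dF(θ), then both the mandate q ≡ 1 and the laissez-faire allocation q(θ) = 1{θ > c} attain this supremum. -/

import Mathlib

open MeasureTheory Set

noncomputable section

/-- Unit-demand allocations: nondecreasing `q : Θ → [0,1]`. -/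
def Q1 (θlow θhigh : ℝ) : Set (ℝ → ℝ) :=
  {q | MonotoneOn q (Icc θlow θhigh) ∧ ∀ θ ∈ Icc θlow θhigh, q θ ∈ Icc 0 1}

/-- The unknown-correlation ambiguity set: Borel `m : Θ → [0,∞)` with mean `μ`. -/
def M0 (F : Measure ℝ) (μ : ℝ) : Set (ℝ → ℝ) :=
  {m | Measurable m ∧ (∀ θ, 0 ≤ m θ) ∧ ∫ θ, m θ ∂F = μ}

/-- Unit-demand total surplus. -/
def W1 (F : Measure ℝ) (c : ℝ) (q m : ℝ → ℝ) : ℝ :=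
  ∫ θ, (θ - c + m θ) * q θ ∂F

/-- Worst-case unit-demand total surplus over the ambiguity set `M`. -/
def worst1 (F : Measure ℝ) (c : ℝ) (M : Set (ℝ → ℝ)) (q : ℝ → ℝ) : ℝ :=
  sInf ((fun m => W1 F c q m) '' M)

section Aux
variable {θlow θhigh c μ : ℝ} {F : Measure ℝ} {f q m : ℝ → ℝ}

lemma F_compl_zero
    (hF : F = (volume.restrict (Icc θlow θhigh)).withDensity fun θ => ENNReal.ofReal (f θ)) :
    F (Icc θlow θhigh)ᶜ = 0 := by
  rw [hF, withDensity_apply _ measurableSet_Icc.compl,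
    Measure.restrict_restrict measurableSet_Icc.compl]
  simp

lemma F_ae_Icc
    (hF : F = (volume.restrict (Icc θlow θhigh)).withDensity fun θ => ENNReal.ofReal (f θ)) :
    ∀ᵐ θ ∂F, θ ∈ Icc θlow θhigh := by
  have h := F_compl_zero hF
  rw [ae_iff]
  exact h

lemma F_null
    (hF : F = (volume.restrict (Icc θlow θhigh)).withDensity fun θ => ENNReal.ofReal (f θ))
    {s : Set ℝ} (hs : volume s = 0) : F s = 0 := by
  have hac : F ≪ volume := by
    rw [hF]
    exact (withDensity_absolutelyContinuous _ _).trans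
      (Measure.absolutelyContinuous_of_le Measure.restrict_le_self)
  exact hac hs

lemma F_ae_Ioc (hθ : θlow < θhigh)
    (hF : F = (volume.restrict (Icc θlow θhigh)).withDensity fun θ => ENNReal.ofReal (f θ)) :
    ∀ᵐ θ ∂F, θ ∈ Ioc θlow θhigh := by
  have h1 := F_ae_Icc hF
  have h2 : ∀ᵐ θ ∂F, θ ≠ θlow := by
    rw [ae_iff]
    simpa using F_null hF (measure_singleton θlow)
  filter_upwards [h1, h2] with θ hIcc hne
  exact ⟨lt_of_le_of_ne hIcc.1 (Ne.symm hne), hIcc.2⟩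

lemma F_pos_Ioc
    (hf_cont : ContinuousOn f (Icc θlow θhigh))
    (hf_pos : ∀ θ ∈ Icc θlow θhigh, 0 < f θ)
    (hF : F = (volume.restrict (Icc θlow θhigh)).withDensity fun θ => ENNReal.ofReal (f θ))
    {b : ℝ} (hb : b ∈ Ioc θlow θhigh) : 0 < F (Ioc θlow b) := by
  have hsub : Icc θlow b ⊆ Icc θlow θhigh := Icc_subset_Icc le_rfl hb.2
  obtain ⟨x0, hx0, hmin⟩ := (isCompact_Icc (a := θlow) (b := b)).exists_isMinOn
    (nonempty_Icc.mpr hb.1.le) (hf_cont.mono hsub)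
  have hx0pos : 0 < f x0 := hf_pos x0 (hsub hx0)
  have hIocsub : Ioc θlow b ⊆ Icc θlow θhigh := fun x hx => ⟨hx.1.le, hx.2.trans hb.2⟩
  rw [hF, withDensity_apply _ measurableSet_Ioc,
    Measure.restrict_restrict measurableSet_Ioc, inter_eq_self_of_subset_left hIocsub]
  calc (0 : ENNReal) < ENNReal.ofReal (f x0) * volume (Ioc θlow b) := by
        apply ENNReal.mul_pos
        · simpa using hx0pos
        · simp [Real.volume_Ioc, hb.1]
    _ = ∫⁻ _ in Ioc θlow b, ENNReal.ofReal (f x0) ∂volume := by rw [setLIntegral_const]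
    _ ≤ ∫⁻ θ in Ioc θlow b, ENNReal.ofReal (f θ) ∂volume := by
        apply setLIntegral_mono' measurableSet_Ioc
        intro x hx
        exact ENNReal.ofReal_le_ofReal (hmin (Ioc_subset_Icc_self hx))

lemma q_aemeasurable (hθ : θlow ≤ θhigh) (haeIcc : ∀ᵐ θ ∂F, θ ∈ Icc θlow θhigh)
    (hq : q ∈ Q1 θlow θhigh) : AEMeasurable q F := by
  set p : ℝ → ℝ := fun θ => max θlow (min θ θhigh) with hp
  have hpmem : ∀ θ, p θ ∈ Icc θlow θhigh := fun θ =>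
    ⟨le_max_left _ _, max_le hθ (min_le_right _ _)⟩
  have hpm : Monotone p := fun a b hab =>
    max_le_max le_rfl (min_le_min hab le_rfl)
  have hqp : Monotone (q ∘ p) := fun a b hab => hq.1 (hpmem a) (hpmem b) (hpm hab)
  refine hqp.measurable.aemeasurable.congr ?_
  filter_upwards [haeIcc] with θ hθm
  simp only [Function.comp, hp]
  rw [min_eq_left hθm.2, max_eq_right hθm.1]

lemma integrable_of_bdd {g : ℝ → ℝ} [IsFiniteMeasure F]
    (haeIcc : ∀ᵐ θ ∂F, θ ∈ Icc θlow θhigh)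
    (hg : AEStronglyMeasurable g F) {C : ℝ}
    (hC : ∀ θ ∈ Icc θlow θhigh, |g θ| ≤ C) : Integrable g F :=
  (integrable_const C).mono' hg (haeIcc.mono fun θ h => by simpa using hC θ h)

lemma abs_lin_bdd : ∀ θ ∈ Icc θlow θhigh, |θ - c| ≤ max |θlow| |θhigh| + |c| := by
  intro θ hθm
  have h1 : |θ| ≤ max |θlow| |θhigh| := abs_le_max_abs_abs hθm.1 hθm.2
  calc |θ - c| ≤ |θ| + |c| := abs_sub _ _
    _ ≤ max |θlow| |θhigh| + |c| := by linarith

lemma M0_integrable (hμ : 0 < μ) (hm : m ∈ M0 F μ) : Integrable m F := by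
  by_contra h
  have := integral_undef h
  rw [hm.2.2] at this
  exact absurd this (ne_of_gt hμ)

lemma mq_integrable (hμ : 0 < μ) (haeq : ∀ᵐ θ ∂F, q θ ∈ Icc 0 1)
    (hqm : AEMeasurable q F) (hm : m ∈ M0 F μ) :
    Integrable (fun θ => m θ * q θ) F := by
  refine (M0_integrable hμ hm).mono' (hm.1.aemeasurable.mul hqm).aestronglyMeasurable ?_
  filter_upwards [haeq] with θ hθq
  rw [Real.norm_eq_abs, abs_mul, abs_of_nonneg (hm.2.1 θ), abs_of_nonneg hθq.1]
  exact mul_le_of_le_one_right (hm.2.1 θ) hθq.2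

lemma lin_q_integrable [IsFiniteMeasure F]
    (haeIcc : ∀ᵐ θ ∂F, θ ∈ Icc θlow θhigh)
    (hqm : AEMeasurable q F) (hq : q ∈ Q1 θlow θhigh) :
    Integrable (fun θ => (θ - c) * q θ) F := by
  refine integrable_of_bdd haeIcc
    (((measurable_id.sub_const c).aemeasurable.mul hqm).aestronglyMeasurable)
    (C := max |θlow| |θhigh| + |c|) ?_
  intro θ hθm
  have h2 := hq.2 θ hθm
  calc |(θ - c) * q θ| = |θ - c| * |q θ| := abs_mul _ _
    _ ≤ |θ - c| * 1 := by
        apply mul_le_mul_of_nonneg_left _ (abs_nonneg _)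
        rw [abs_of_nonneg h2.1]; exact h2.2
    _ ≤ max |θlow| |θhigh| + |c| := by rw [mul_one]; exact abs_lin_bdd θ hθm

lemma W1_split [IsFiniteMeasure F] (hθ : θlow ≤ θhigh) (hμ : 0 < μ)
    (haeIcc : ∀ᵐ θ ∂F, θ ∈ Icc θlow θhigh)
    (hq : q ∈ Q1 θlow θhigh) (hm : m ∈ M0 F μ) :
    W1 F c q m = (∫ θ, (θ - c) * q θ ∂F) + ∫ θ, m θ * q θ ∂F := by
  have hqm := q_aemeasurable hθ haeIcc hq
  have haeq : ∀ᵐ θ ∂F, q θ ∈ Icc 0 1 := haeIcc.mono fun θ h => hq.2 θ h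
  have h1 := lin_q_integrable (c := c) haeIcc hqm hq
  have h2 := mq_integrable hμ haeq hqm hm
  rw [W1, ← integral_add h1 h2]
  congr 1; funext θ; ring

lemma int_max1 [IsFiniteMeasure F] (haeIcc : ∀ᵐ θ ∂F, θ ∈ Icc θlow θhigh) :
    Integrable (fun θ => max (θ - c) 0) F := by
  refine integrable_of_bdd haeIcc
    (((continuous_id.sub continuous_const).max continuous_const).aestronglyMeasurable)
    (C := max |θlow| |θhigh| + |c|) ?_
  intro θ hθm
  rcases le_total (θ - c) 0 with h | h
  · rw [max_eq_right h]; simpa using (abs_nonneg (θ - c)).trans (abs_lin_bdd θ hθm)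
  · rw [max_eq_left h]; exact abs_lin_bdd θ hθm

lemma int_max2 [IsFiniteMeasure F] (haeIcc : ∀ᵐ θ ∂F, θ ∈ Icc θlow θhigh) :
    Integrable (fun θ => max (c - θ) 0) F := by
  refine integrable_of_bdd haeIcc
    (((continuous_const.sub continuous_id).max continuous_const).aestronglyMeasurable)
    (C := max |θlow| |θhigh| + |c|) ?_
  intro θ hθm
  have := abs_lin_bdd (c := c) θ hθm
  rw [abs_sub_comm] at this
  rcases le_total (c - θ) 0 with h | h
  · rw [max_eq_right h]; simpa using (abs_nonneg (c - θ)).trans this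
  · rw [max_eq_left h]; exact this

lemma int_lin [IsFiniteMeasure F] (haeIcc : ∀ᵐ θ ∂F, θ ∈ Icc θlow θhigh) :
    Integrable (fun θ => θ - c) F :=
  integrable_of_bdd haeIcc ((continuous_id.sub continuous_const).aestronglyMeasurable)
    (C := max |θlow| |θhigh| + |c|) abs_lin_bdd

lemma lin_eq [IsFiniteMeasure F] (haeIcc : ∀ᵐ θ ∂F, θ ∈ Icc θlow θhigh) :
    ∫ θ, (θ - c) ∂F = (∫ θ, max (θ - c) 0 ∂F) - ∫ θ, max (c - θ) 0 ∂F := by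
  rw [← integral_sub (int_max1 haeIcc) (int_max2 haeIcc)]
  apply integral_congr_ae (ae_of_all _ ?_)
  intro θ
  rcases le_total θ c with h | h
  · rw [max_eq_right (by linarith), max_eq_left (by linarith)]; ring
  · rw [max_eq_left (by linarith), max_eq_right (by linarith)]; ring

lemma W1_bddBelow [IsFiniteMeasure F] (hθ : θlow ≤ θhigh) (hμ : 0 < μ)
    (haeIcc : ∀ᵐ θ ∂F, θ ∈ Icc θlow θhigh) (hq : q ∈ Q1 θlow θhigh) :
    (∀ m ∈ M0 F μ, (∫ θ, (θ - c) * q θ ∂F) ≤ W1 F c q m) ∧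
      BddBelow ((fun m => W1 F c q m) '' M0 F μ) := by
  have hmain : ∀ m ∈ M0 F μ, (∫ θ, (θ - c) * q θ ∂F) ≤ W1 F c q m := by
    intro m hm
    rw [W1_split hθ hμ haeIcc hq hm]
    have h0 : 0 ≤ ∫ θ, m θ * q θ ∂F :=
      integral_nonneg_of_ae (by
        filter_upwards [haeIcc] with θ h
        exact mul_nonneg (hm.2.1 θ) (hq.2 θ h).1)
    linarith
  exact ⟨hmain, ⟨_, by rintro x ⟨m, hm, rfl⟩; exact hmain m hm⟩⟩


lemma worst1_le [IsProbabilityMeasure F] (hθ : θlow < θhigh) (hμ : 0 < μ)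
    (hf_cont : ContinuousOn f (Icc θlow θhigh))
    (hf_pos : ∀ θ ∈ Icc θlow θhigh, 0 < f θ)
    (hF : F = (volume.restrict (Icc θlow θhigh)).withDensity fun θ => ENNReal.ofReal (f θ))
    (hq : q ∈ Q1 θlow θhigh) :
    worst1 F c (M0 F μ) q ≤
      (∫ θ, max (θ - c) 0 ∂F) + max (μ - ∫ θ, max (c - θ) 0 ∂F) 0 := by
  set A := ∫ θ, max (θ - c) 0 ∂F with hA
  set K := ∫ θ, max (c - θ) 0 ∂F with hK
  have haeIcc := F_ae_Icc hF
  have haeIoc := F_ae_Ioc hθ hF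
  have hqm := q_aemeasurable hθ.le haeIcc hq
  have haeq : ∀ᵐ θ ∂F, q θ ∈ Icc 0 1 := haeIcc.mono fun θ h => hq.2 θ h
  set a := sInf (q '' Ioc θlow θhigh) with ha
  have hmemhigh : q θhigh ∈ q '' Ioc θlow θhigh := ⟨θhigh, ⟨hθ, le_rfl⟩, rfl⟩
  have hne : (q '' Ioc θlow θhigh).Nonempty := ⟨_, hmemhigh⟩
  have hbdd : BddBelow (q '' Ioc θlow θhigh) := by
    refine ⟨0, ?_⟩
    rintro x ⟨y, hy, rfl⟩
    exact (hq.2 y (Ioc_subset_Icc_self hy)).1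
  have ha0 : 0 ≤ a := le_csInf hne (by rintro x ⟨y, hy, rfl⟩; exact (hq.2 y (Ioc_subset_Icc_self hy)).1)
  have ha1 : a ≤ 1 := (csInf_le hbdd hmemhigh).trans (hq.2 θhigh (right_mem_Icc.mpr hθ.le)).2
  have hImax1 := int_max1 (c := c) haeIcc
  have hImax2 := int_max2 (c := c) haeIcc
  have hIlhs := lin_q_integrable (c := c) haeIcc hqm hq
  have hkey : ∫ θ, (θ - c) * q θ ∂F ≤ A - a * K := by
    have hmono : ∀ᵐ θ ∂F, (θ - c) * q θ ≤ max (θ - c) 0 - a * max (c - θ) 0 := by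
      filter_upwards [haeIoc] with θ hθm
      have hqa : a ≤ q θ := csInf_le hbdd ⟨θ, hθm, rfl⟩
      have hq1 : q θ ≤ 1 := (hq.2 θ (Ioc_subset_Icc_self hθm)).2
      rcases le_total c θ with h | h
      · rw [max_eq_left (by linarith), max_eq_right (by linarith)]
        nlinarith
      · rw [max_eq_right (by linarith), max_eq_left (by linarith)]
        nlinarith
    calc ∫ θ, (θ - c) * q θ ∂F ≤ ∫ θ, (max (θ - c) 0 - a * max (c - θ) 0) ∂F :=
          integral_mono_ae hIlhs (hImax1.sub (hImax2.const_mul a)) hmono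
      _ = A - a * K := by
          rw [integral_sub hImax1 (hImax2.const_mul a), integral_const_mul]
  obtain ⟨hWlb, hwbdd⟩ := W1_bddBelow (c := c) hθ.le hμ haeIcc hq
  have key : ∀ ε > 0, worst1 F c (M0 F μ) q ≤ A - a * K + μ * a + μ * ε := by
    intro ε hε
    obtain ⟨x, ⟨θs, hθs, rfl⟩, hx⟩ := exists_lt_of_csInf_lt hne (lt_add_of_pos_right a hε)
    set I := Ioc θlow θs with hI
    have hIpos : 0 < F I := F_pos_Ioc hf_cont hf_pos hF hθs
    have hFIt : 0 < (F I).toReal := ENNReal.toReal_pos hIpos.ne' (measure_ne_top F I)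
    set r := μ / (F I).toReal with hr
    have hr0 : 0 ≤ r := div_nonneg hμ.le hFIt.le
    set m : ℝ → ℝ := I.indicator (fun _ => r) with hmdef
    have hmM0 : m ∈ M0 F μ := by
      refine ⟨measurable_const.indicator measurableSet_Ioc,
        fun θ => indicator_nonneg (fun _ _ => hr0) θ, ?_⟩
      rw [hmdef]
      rw [integral_indicator_const r measurableSet_Ioc, smul_eq_mul, hr, measureReal_def, ← hI]
      field_simp
    have hmq : ∫ θ, m θ * q θ ∂F ≤ μ * (a + ε) := by
      have h1 : (fun θ => m θ * q θ) = I.indicator (fun θ => r * q θ) := by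
        funext θ; by_cases h : θ ∈ I <;> simp [hmdef, indicator, h]
      have hIQ : Integrable (fun θ => r * q θ) F := by
        refine integrable_of_bdd haeIcc
          ((aemeasurable_const.mul hqm).aestronglyMeasurable) (C := r) ?_
        intro θ h
        rw [abs_mul, abs_of_nonneg hr0, abs_of_nonneg (hq.2 θ h).1]
        exact mul_le_of_le_one_right hr0 (hq.2 θ h).2
      rw [h1, integral_indicator measurableSet_Ioc]
      calc ∫ θ in I, r * q θ ∂F ≤ ∫ _ in I, r * q θs ∂F := by
            apply setIntegral_mono_on hIQ.integrableOn
              (integrableOn_const (measure_ne_top F I)) measurableSet_Ioc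
            intro x hxI
            have hqx : q x ≤ q θs :=
              hq.1 ⟨hxI.1.le, hxI.2.trans hθs.2⟩ ⟨hθs.1.le, hθs.2⟩ hxI.2
            exact mul_le_mul_of_nonneg_left hqx hr0
        _ = (F I).toReal * (r * q θs) := by rw [setIntegral_const, smul_eq_mul, measureReal_def]
        _ = μ * q θs := by rw [hr]; field_simp
        _ ≤ μ * (a + ε) := mul_le_mul_of_nonneg_left hx.le hμ.le
    refine (csInf_le hwbdd ⟨m, hmM0, rfl⟩).trans ?_
    show W1 F c q m ≤ _
    rw [W1_split hθ.le hμ haeIcc hq hmM0]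
    nlinarith [hkey, hmq]
  have hfin : worst1 F c (M0 F μ) q ≤ A + a * (μ - K) := by
    apply le_of_forall_pos_le_add
    intro ε hε
    have h2 : μ * (ε / μ) = ε := by field_simp
    have := key (ε / μ) (div_pos hε hμ)
    nlinarith
  have hmax : a * (μ - K) ≤ max (μ - K) 0 := by
    rcases le_total 0 (μ - K) with h | h
    · calc a * (μ - K) ≤ 1 * (μ - K) := mul_le_mul_of_nonneg_right ha1 h
        _ ≤ max (μ - K) 0 := by rw [one_mul]; exact le_max_left _ _
    · calc a * (μ - K) ≤ 0 := mul_nonpos_of_nonneg_of_nonpos ha0 h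
        _ ≤ max (μ - K) 0 := le_max_right _ _
  linarith

lemma mem_Q1_one : (fun _ => (1:ℝ)) ∈ Q1 θlow θhigh :=
  ⟨fun _ _ _ _ _ => le_rfl, fun _ _ => ⟨zero_le_one, le_rfl⟩⟩

lemma mem_Q1_LF : (fun θ => if c < θ then (1:ℝ) else 0) ∈ Q1 θlow θhigh := by
  constructor
  · intro x _ y _ hxy
    dsimp only
    by_cases h : c < x
    · rw [if_pos h, if_pos (h.trans_le hxy)]
    · rw [if_neg h]
      by_cases h' : c < y <;> simp [h']
  · intro θ _
    by_cases h : c < θ <;> simp [h]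

lemma worst1_one [IsProbabilityMeasure F] (hθ : θlow < θhigh) (hμ : 0 < μ)
    (hF : F = (volume.restrict (Icc θlow θhigh)).withDensity fun θ => ENNReal.ofReal (f θ)) :
    worst1 F c (M0 F μ) (fun _ => 1) = (∫ θ, (θ - c) ∂F) + μ := by
  have haeIcc := F_ae_Icc hF
  have hval : ∀ m ∈ M0 F μ, W1 F c (fun _ => 1) m = (∫ θ, (θ - c) ∂F) + μ := by
    intro m hm
    rw [W1_split hθ.le hμ haeIcc mem_Q1_one hm]
    simp only [mul_one]
    rw [hm.2.2]
  have hm0 : (fun _ => μ) ∈ M0 F μ := ⟨measurable_const, fun _ => hμ.le, by simp⟩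
  have himg : ((fun m => W1 F c (fun _ => 1) m) '' M0 F μ) = {(∫ θ, (θ - c) ∂F) + μ} := by
    apply eq_singleton_iff_nonempty_unique_mem.mpr
    refine ⟨⟨_, ⟨_, hm0, rfl⟩⟩, ?_⟩
    rintro x ⟨m, hm, rfl⟩
    exact hval m hm
  rw [worst1, himg, csInf_singleton]

lemma worst1_LF [IsProbabilityMeasure F] (hθ : θlow < θhigh) (hμ : 0 < μ)
    (hF : F = (volume.restrict (Icc θlow θhigh)).withDensity fun θ => ENNReal.ofReal (f θ))
    (hFc : 0 < F {θ | θ ∈ Icc θlow θhigh ∧ θ < c}) :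
    worst1 F c (M0 F μ) (fun θ => if c < θ then 1 else 0) = ∫ θ, max (θ - c) 0 ∂F := by
  have haeIcc := F_ae_Icc hF
  set qLF : ℝ → ℝ := fun θ => if c < θ then 1 else 0 with hqdef
  have hqQ1 : qLF ∈ Q1 θlow θhigh := mem_Q1_LF
  have hpt : ∀ θ : ℝ, (θ - c) * qLF θ = max (θ - c) 0 := by
    intro θ
    by_cases h : c < θ
    · simp only [hqdef, if_pos h, mul_one]
      rw [max_eq_left (by linarith)]
    · simp only [hqdef, if_neg h, mul_zero]
      rw [max_eq_right (by push_neg at h; linarith)]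
  have hlin : ∫ θ, (θ - c) * qLF θ ∂F = ∫ θ, max (θ - c) 0 ∂F :=
    integral_congr_ae (ae_of_all _ hpt)
  obtain ⟨hWlb, hwbdd⟩ := W1_bddBelow (c := c) hθ.le hμ haeIcc hqQ1
  -- the minimizing m, supported below c
  set S : Set ℝ := {θ | θ ∈ Icc θlow θhigh ∧ θ < c} with hSdef
  have hSmeas : MeasurableSet S := measurableSet_Icc.inter measurableSet_Iio
  have hFSt : 0 < (F S).toReal := ENNReal.toReal_pos hFc.ne' (measure_ne_top F S)
  set r := μ / (F S).toReal with hr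
  have hr0 : 0 ≤ r := div_nonneg hμ.le hFSt.le
  set mS : ℝ → ℝ := S.indicator (fun _ => r) with hmdef
  have hmM0 : mS ∈ M0 F μ := by
    refine ⟨measurable_const.indicator hSmeas,
      fun θ => indicator_nonneg (fun _ _ => hr0) θ, ?_⟩
    rw [hmdef, integral_indicator_const r hSmeas, smul_eq_mul, hr, measureReal_def]
    field_simp
  have hzero : ∀ θ, mS θ * qLF θ = 0 := by
    intro θ
    by_cases h : θ ∈ S
    · have hc : ¬ c < θ := not_lt.mpr h.2.le
      simp [hqdef, hc]
    · simp [hmdef, indicator_of_notMem h]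
  have hWS : W1 F c qLF mS = ∫ θ, max (θ - c) 0 ∂F := by
    rw [W1_split hθ.le hμ haeIcc hqQ1 hmM0, hlin]
    have : ∫ θ, mS θ * qLF θ ∂F = 0 := by
      simp only [hzero, integral_zero]
    rw [this, add_zero]
  have hmem : W1 F c qLF mS ∈ (fun m => W1 F c qLF m) '' M0 F μ := ⟨mS, hmM0, rfl⟩
  refine le_antisymm ?_ ?_
  · exact (csInf_le hwbdd hmem).trans_eq hWS
  · refine le_csInf ⟨_, hmem⟩ ?_
    rintro x ⟨m, hm, rfl⟩
    exact le_of_eq_of_le hlin.symm (hWlb m hm)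

end Aux

/-- Value of the unit-demand problem under unknown correlation, and the
knife-edge indifference between the mandate and laissez-faire when
`μ = ∫ max (c - θ) 0 dF`. -/
theorem vaccine_value_and_knife_edge
    (θlow θhigh c μ : ℝ) (hθlow : 0 ≤ θlow) (hθ : θlow < θhigh)
    (hc : 0 < c) (hμ : 0 < μ)
    (F : Measure ℝ) [IsProbabilityMeasure F]
    (f : ℝ → ℝ) (hf_cont : ContinuousOn f (Icc θlow θhigh))
    (hf_pos : ∀ θ ∈ Icc θlow θhigh, 0 < f θ)
    (hF : F = (volume.restrict (Icc θlow θhigh)).withDensity fun θ => ENNReal.ofReal (f θ))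
    (hFc : 0 < F {θ | θ ∈ Icc θlow θhigh ∧ θ < c}) :
    sSup ((fun q => worst1 F c (M0 F μ) q) '' Q1 θlow θhigh) =
      (∫ θ, max (θ - c) 0 ∂F) + max (μ - ∫ θ, max (c - θ) 0 ∂F) 0 ∧
    (μ = ∫ θ, max (c - θ) 0 ∂F →
      worst1 F c (M0 F μ) (fun _ => 1) =
        sSup ((fun q => worst1 F c (M0 F μ) q) '' Q1 θlow θhigh) ∧
      worst1 F c (M0 F μ) (fun θ => if c < θ then 1 else 0) =
        sSup ((fun q => worst1 F c (M0 F μ) q) '' Q1 θlow θhigh)) := by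
  set A := ∫ θ, max (θ - c) 0 ∂F with hA
  set K := ∫ θ, max (c - θ) 0 ∂F with hK
  have haeIcc := F_ae_Icc hF
  have hlinAK : ∫ θ, (θ - c) ∂F = A - K := lin_eq haeIcc
  have hub : ∀ x ∈ (fun q => worst1 F c (M0 F μ) q) '' Q1 θlow θhigh,
      x ≤ A + max (μ - K) 0 := by
    rintro x ⟨q, hq, rfl⟩
    exact worst1_le hθ hμ hf_cont hf_pos hF hq
  have h1val : worst1 F c (M0 F μ) (fun _ => 1) = A - K + μ := by
    rw [worst1_one hθ hμ hF, hlinAK]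
  have hLFval : worst1 F c (M0 F μ) (fun θ => if c < θ then 1 else 0) = A :=
    worst1_LF hθ hμ hF hFc
  have hmem : A + max (μ - K) 0 ∈ (fun q => worst1 F c (M0 F μ) q) '' Q1 θlow θhigh := by
    rcases le_total μ K with h | h
    · refine ⟨fun θ => if c < θ then 1 else 0, mem_Q1_LF, ?_⟩
      show worst1 F c (M0 F μ) (fun θ => if c < θ then 1 else 0) = _
      rw [hLFval, max_eq_right (by linarith), add_zero]
    · refine ⟨fun _ => 1, mem_Q1_one, ?_⟩
      show worst1 F c (M0 F μ) (fun _ => 1) = _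
      rw [h1val, max_eq_left (by linarith)]
      ring
  have hsup : sSup ((fun q => worst1 F c (M0 F μ) q) '' Q1 θlow θhigh) = A + max (μ - K) 0 :=
    le_antisymm (csSup_le ⟨_, hmem⟩ hub) (le_csSup ⟨_, hub⟩ hmem)
  refine ⟨hsup, fun hμK => ?_⟩
  have hmax0 : max (μ - K) 0 = 0 := max_eq_right (by rw [hμK]; simp)
  constructor
  · rw [h1val, hsup, hmax0, add_zero, hμK]
    ring
  · rw [hLFval, hsup, hmax0, add_zero]
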